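/- Let ρ ∈ Matrix (Fin d) (Fin d) ℂ and σ ∈ Matrix (Fin d') (Fin d') ℂ be positive definite matrices of trace 1, let A be a measurement with n outcomes on ℂ^d and B a measurement with m outcomes on ℂ^{d'}, all of whose effects are nonzero. Define the product measurement A ⊗ B with n·m outcomes by (A ⊗ B) (x, y) = (A x) ⊗ₖ (B y) (Kronecker product). Then F_{ρ ⊗ₖ σ}(A ⊗ B) equals the reindexing of the Kronecker product F_ρ(A) ⊗ₖ F_σ(B) along the index bijection ((i,i'),(j,j')) ↦ ((i,j),(i',j')); explicitly, for all i,j,k,l ∈ Fin d and i',j',k',l' ∈ Fin d': F_{ρ⊗ₖσ}(A⊗B) ((i,i'),(j,j')) ((k,k'),(l,l')) = F_ρ(A) ((i,j),(k,l)) * F_σ(B) ((i',j'),(k',l')). -/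

import Mathlib

open Matrix
open scoped Kronecker ComplexOrder MatrixOrder

noncomputable section

/-- A measurement (POVM): a finite family of positive semidefinite matrices summing to `1`. -/
def IsMeasurement {ι κ : Type*} [Fintype ι] [DecidableEq ι] [Fintype κ]
    (A : κ → Matrix ι ι ℂ) : Prop :=
  (∀ x, (A x).PosSemidef) ∧ ∑ x, A x = 1

/-- `A` is a post-processing of `B`: `A ⪯ B`. -/
def PostProc {ι : Type*} {n m : ℕ}
    (A : Fin n → Matrix ι ι ℂ) (B : Fin m → Matrix ι ι ℂ) : Prop :=
  ∃ μ : Fin n → Fin m → ℝ,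
    (∀ x y, 0 ≤ μ x y) ∧ (∀ y, ∑ x, μ x y = 1) ∧
    (∀ x, A x = ∑ y, (μ x y : ℂ) • B y)

/-- The outer product `|E⟩⟨F|` of the vectorizations of two matrices. -/
def outerProd {ι : Type*} (E F : Matrix ι ι ℂ) : Matrix (ι × ι) (ι × ι) ℂ :=
  Matrix.of fun p q => E p.1 p.2 * star (F q.1 q.2)

/-- The (un-normalized) Fisher information map of a measurement. -/
noncomputable def Fisher {ι κ : Type*} [Fintype ι] [Fintype κ]
    (A : κ → Matrix ι ι ℂ) : Matrix (ι × ι) (ι × ι) ℂ :=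
  ∑ x, (Matrix.trace (A x))⁻¹ • outerProd (A x) (A x)

/-- The generalized Fisher information map of a measurement, relative to a
positive definite state `ρ` (with positive semidefinite square root `ρ^{1/2}`). -/
noncomputable def FisherRho {ι κ : Type*} [Fintype ι] [DecidableEq ι] [Fintype κ]
    {ρ : Matrix ι ι ℂ} (hρ : ρ.PosDef) (A : κ → Matrix ι ι ℂ) :
    Matrix (ι × ι) (ι × ι) ℂ :=
  ∑ x, (Matrix.trace (ρ * A x))⁻¹ •
    outerProd (CFC.sqrt ρ * A x) (CFC.sqrt ρ * A x)

/-- The height of a finite family of self-adjoint matrices: the infimum of the traces of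
Hermitian matrices dominating every member in the Loewner order. -/
noncomputable def height {ι κ : Type*} [Fintype ι] [Fintype κ]
    (X : κ → Matrix ι ι ℂ) : ℝ :=
  sInf { t : ℝ | ∃ H : Matrix ι ι ℂ, H.IsHermitian ∧
    (∀ i, (H - X i).PosSemidef) ∧ t = (Matrix.trace H).re }

/-! The square root of `ρ ⊗ₖ σ` is `√ρ ⊗ₖ √σ` by uniqueness of positive square roots. Since
traces, products and outer products are all multiplicative under `⊗ₖ`, each summand of
`F_{ρ⊗σ}(A ⊗ B)` indexed by a pair of outcomes `(x, y)` is the product of the `x`-summand of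
`F_ρ(A)` and the `y`-summand of `F_σ(B)`, and the sum over pairs splits. -/

variable {ι ι' κ κ' : Type*}

namespace Matrix

theorem sum_kronecker_sum [Fintype κ] [Fintype κ'] {α : Type*} [NonUnitalNonAssocSemiring α]
    (A : κ → Matrix ι ι α) (B : κ' → Matrix ι' ι' α) :
    (∑ x, A x) ⊗ₖ (∑ y, B y) = ∑ p : κ × κ', A p.1 ⊗ₖ B p.2 := by
  ext ⟨i, i'⟩ ⟨j, j'⟩
  simp only [Matrix.sum_apply, kroneckerMap_apply, Finset.sum_mul_sum, Fintype.sum_prod_type]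

theorem sqrt_kronecker {𝕜 : Type*} [RCLike 𝕜] [Fintype ι] [Fintype ι'] [DecidableEq ι]
    [DecidableEq ι'] {A : Matrix ι ι 𝕜} {B : Matrix ι' ι' 𝕜} (hA : A.PosSemidef)
    (hB : B.PosSemidef) :
    CFC.sqrt (A ⊗ₖ B) = CFC.sqrt A ⊗ₖ CFC.sqrt B := by
  refine CFC.sqrt_unique ?_ ((CFC.sqrt_nonneg A).posSemidef.kronecker
    (CFC.sqrt_nonneg B).posSemidef).nonneg
  rw [← mul_kronecker_mul, CFC.sqrt_mul_sqrt_self A hA.nonneg, CFC.sqrt_mul_sqrt_self B hB.nonneg]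

end Matrix

theorem IsMeasurement.kronecker [Fintype ι] [DecidableEq ι] [Fintype ι'] [DecidableEq ι']
    [Fintype κ] [Fintype κ'] {A : κ → Matrix ι ι ℂ} {B : κ' → Matrix ι' ι' ℂ}
    (hA : IsMeasurement A) (hB : IsMeasurement B) :
    IsMeasurement fun p : κ × κ' => A p.1 ⊗ₖ B p.2 :=
  ⟨fun p => (hA.1 p.1).kronecker (hB.1 p.2), by
    rw [← sum_kronecker_sum, hA.2, hB.2, one_kronecker_one]⟩

theorem outerProd_kronecker_apply (E F : Matrix ι ι ℂ) (E' F' : Matrix ι' ι' ℂ)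
    (i j k l : ι) (i' j' k' l' : ι') :
    outerProd (E ⊗ₖ E') (F ⊗ₖ F') ((i, i'), (j, j')) ((k, k'), (l, l')) =
      outerProd E F (i, j) (k, l) * outerProd E' F' (i', j') (k', l') := by
  simp only [outerProd, of_apply, kroneckerMap_apply, star_mul']
  ring

theorem fisherRho_kronecker_apply [Fintype ι] [DecidableEq ι] [Fintype ι'] [DecidableEq ι']
    [Fintype κ] [Fintype κ'] {ρ : Matrix ι ι ℂ} {σ : Matrix ι' ι' ℂ} (hρ : ρ.PosDef)
    (hσ : σ.PosDef) (hρσ : (ρ ⊗ₖ σ).PosDef) (A : κ → Matrix ι ι ℂ) (B : κ' → Matrix ι' ι' ℂ)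
    (i j k l : ι) (i' j' k' l' : ι') :
    FisherRho hρσ (fun p : κ × κ' => A p.1 ⊗ₖ B p.2) ((i, i'), (j, j')) ((k, k'), (l, l')) =
      FisherRho hρ A (i, j) (k, l) * FisherRho hσ B (i', j') (k', l') := by
  simp only [FisherRho, Matrix.sum_apply, Matrix.smul_apply, smul_eq_mul, Finset.sum_mul_sum,
    Fintype.sum_prod_type, sqrt_kronecker hρ.posSemidef hσ.posSemidef, ← mul_kronecker_mul,
    trace_kronecker, outerProd_kronecker_apply, mul_inv]
  exact Fintype.sum_congr _ _ fun x => Fintype.sum_congr _ _ fun y => mul_mul_mul_comm ..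

theorem stmt8_general {d d' n m : ℕ}
    {ρ : Matrix (Fin d) (Fin d) ℂ} (hρ : ρ.PosDef)
    {σ : Matrix (Fin d') (Fin d') ℂ} (hσ : σ.PosDef)
    (A : Fin n → Matrix (Fin d) (Fin d) ℂ) (B : Fin m → Matrix (Fin d') (Fin d') ℂ)
    (hA : IsMeasurement A) (hB : IsMeasurement B)
    (hρσ : (ρ ⊗ₖ σ).PosDef) :
    IsMeasurement (fun p : Fin n × Fin m => A p.1 ⊗ₖ B p.2) ∧
    ∀ (i j k l : Fin d) (i' j' k' l' : Fin d'),
      FisherRho hρσ (fun p : Fin n × Fin m => A p.1 ⊗ₖ B p.2)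
          ((i, i'), (j, j')) ((k, k'), (l, l')) =
        FisherRho hρ A (i, j) (k, l) * FisherRho hσ B (i', j') (k', l') :=
  ⟨hA.kronecker hB, fisherRho_kronecker_apply hρ hσ hρσ A B⟩

/-- The generalized Fisher information map respects tensor (Kronecker) products. -/
theorem stmt8 {d d' n m : ℕ}
    {ρ : Matrix (Fin d) (Fin d) ℂ} (hρ : ρ.PosDef) (hρtr : Matrix.trace ρ = 1)
    {σ : Matrix (Fin d') (Fin d') ℂ} (hσ : σ.PosDef) (hσtr : Matrix.trace σ = 1)
    (A : Fin n → Matrix (Fin d) (Fin d) ℂ) (B : Fin m → Matrix (Fin d') (Fin d') ℂ)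
    (hA : IsMeasurement A) (hB : IsMeasurement B)
    (hA0 : ∀ x, A x ≠ 0) (hB0 : ∀ y, B y ≠ 0)
    (hρσ : (ρ ⊗ₖ σ).PosDef) :
    IsMeasurement (fun p : Fin n × Fin m => A p.1 ⊗ₖ B p.2) ∧
    ∀ (i j k l : Fin d) (i' j' k' l' : Fin d'),
      FisherRho hρσ (fun p : Fin n × Fin m => A p.1 ⊗ₖ B p.2)
          ((i, i'), (j, j')) ((k, k'), (l, l')) =
        FisherRho hρ A (i, j) (k, l) * FisherRho hσ B (i', j') (k', l') :=
  stmt8_general hρ hσ A B hA hB hρσ
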